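/- arXiv:math/0703672 — 2 statements merged into one kernel-verified Lean document; each statement's English description precedes it below -/
import Mathlib

section
/- Let f be a polynomial in n variables over ℝ of total degree at most n. Then the coefficient of the monomial t₁t₂⋯tₙ in f equals the alternating sum ∑_{S⊆{1,…,n}} (-1)^{n-|S|} f(∑_{i∈S} eᵢ), summed over all subsets S of {1,…,n} including the empty set (whose term is (-1)^n f(0)), where eᵢ is the i-th standard basis vector. -/
open Finset

lemma aux_powerset {α : Type*} [DecidableEq α] (x : Finset α) :
    (∑ m ∈ x.powerset, (-1 : ℝ) ^ m.card) = if x = ∅ then 1 else 0 := by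
  have h : ((∑ m ∈ x.powerset, (-1 : ℤ) ^ m.card : ℤ) : ℝ)
      = ∑ m ∈ x.powerset, (-1 : ℝ) ^ m.card := by push_cast; rfl
  rw [← h, Finset.sum_powerset_neg_one_pow_card]
  split <;> simp

lemma aux_neg_pow_sub {a b : ℕ} (h : b ≤ a) : (-1 : ℝ) ^ (a - b) = (-1) ^ a * (-1) ^ b := by
  rw [← pow_add, show a + b = (a - b) + 2 * b from by omega, pow_add, pow_mul]
  norm_num

lemma aux_key (n : ℕ) (T : Finset (Fin n)) :
    ∑ S : Finset (Fin n), (-1 : ℝ) ^ (n - S.card) * (if T ⊆ S then 1 else 0)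
      = if T = Finset.univ then 1 else 0 := by
  classical
  simp only [mul_ite, mul_one, mul_zero]
  rw [← Finset.sum_filter]
  have hinj : ∀ U ∈ Tᶜ.powerset, ∀ V ∈ Tᶜ.powerset, T ∪ U = T ∪ V → U = V := by
    intro U hU V hV h
    rw [mem_powerset] at hU hV
    have hU' : Disjoint T U := (disjoint_compl_right : Disjoint T Tᶜ).mono_right hU
    have hV' : Disjoint T V := (disjoint_compl_right : Disjoint T Tᶜ).mono_right hV
    have := congrArg (· \ T) h
    simpa [Finset.union_sdiff_cancel_left hU', Finset.union_sdiff_cancel_left hV'] using this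
  have himg : (Finset.univ.filter (fun S => T ⊆ S)) = Tᶜ.powerset.image (fun U => T ∪ U) := by
    ext S
    simp only [mem_filter, mem_univ, true_and, mem_image, mem_powerset]
    constructor
    · intro h
      refine ⟨S \ T, fun i hi => ?_, by rw [Finset.union_sdiff_of_subset h]⟩
      simp only [Finset.mem_sdiff] at hi
      simpa using hi.2
    · rintro ⟨U, hU, rfl⟩; exact Finset.subset_union_left
  rw [himg, Finset.sum_image hinj]
  have hstep : ∑ U ∈ Tᶜ.powerset, (-1 : ℝ) ^ (n - (T ∪ U).card)
      = (-1 : ℝ) ^ Tᶜ.card * ∑ U ∈ Tᶜ.powerset, (-1 : ℝ) ^ U.card := by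
    rw [Finset.mul_sum]
    refine Finset.sum_congr rfl fun U hU => ?_
    rw [mem_powerset] at hU
    have hdisj : Disjoint T U := (disjoint_compl_right : Disjoint T Tᶜ).mono_right hU
    have hc : (T ∪ U).card = T.card + U.card := Finset.card_union_of_disjoint hdisj
    have hTc : Tᶜ.card = n - T.card := by rw [Finset.card_compl, Fintype.card_fin]
    have hUle : U.card ≤ Tᶜ.card := Finset.card_le_card hU
    have hTn : T.card ≤ n := by
      simpa [Fintype.card_fin] using Finset.card_le_card (Finset.subset_univ T)
    have h1 : n - (T ∪ U).card = Tᶜ.card - U.card := by omega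
    rw [h1, aux_neg_pow_sub hUle]
  rw [hstep, aux_powerset]
  by_cases hT : T = Finset.univ
  · simp [hT]
  · have : Tᶜ ≠ ∅ := by
      intro h
      exact hT (by simpa [Finset.compl_eq_empty_iff] using h)
    simp [hT, this]

/-- The coefficient of `t₁⋯tₙ` in a polynomial of total degree at most `n` equals the
alternating sum `∑_{S ⊆ {1,…,n}} (-1)^{n-|S|} f(∑_{i∈S} eᵢ)` (empty set included). -/
theorem stmt_0 (n : ℕ) (f : MvPolynomial (Fin n) ℝ) (hf : f.totalDegree ≤ n) :
    f.coeff (∑ i : Fin n, Finsupp.single i 1) =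
      ∑ S : Finset (Fin n), (-1 : ℝ) ^ (n - S.card) *
        MvPolynomial.eval (fun i => if i ∈ S then (1 : ℝ) else 0) f := by
  classical
  set allOnes : Fin n →₀ ℕ := ∑ i : Fin n, Finsupp.single i 1 with hallOnes
  have hallOnesApp : ∀ i, allOnes i = 1 := by
    intro i
    rw [hallOnes, Finsupp.finset_sum_apply]
    rw [Finset.sum_eq_single i (fun j _ hj => Finsupp.single_eq_of_ne' hj) (by simp)]
    simp
  have hprod : ∀ (d : Fin n →₀ ℕ) (S : Finset (Fin n)),
      (∏ i : Fin n, (if i ∈ S then (1 : ℝ) else 0) ^ d i)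
        = if d.support ⊆ S then 1 else 0 := by
    intro d S
    by_cases h : d.support ⊆ S
    · rw [if_pos h]
      apply Finset.prod_eq_one
      intro i _
      by_cases hi : i ∈ S
      · simp [hi]
      · have : d i = 0 := by
          by_contra hd
          exact hi (h (Finsupp.mem_support_iff.mpr hd))
        simp [hi, this]
    · rw [if_neg h]
      obtain ⟨i, hi, his⟩ := Finset.not_subset.mp h
      refine Finset.prod_eq_zero (Finset.mem_univ i) ?_
      have : d i ≠ 0 := Finsupp.mem_support_iff.mp hi
      simp [his, zero_pow this]
  -- rewrite the RHS
  have heval : ∀ S : Finset (Fin n),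
      MvPolynomial.eval (fun i => if i ∈ S then (1 : ℝ) else 0) f
        = ∑ d ∈ f.support, f.coeff d * (if d.support ⊆ S then 1 else 0) := by
    intro S
    rw [MvPolynomial.eval_eq']
    exact Finset.sum_congr rfl fun d _ => by rw [hprod]
  calc f.coeff allOnes
      = ∑ d ∈ f.support, f.coeff d * (if d.support = Finset.univ then 1 else 0) := by
        have hkey : ∀ d ∈ f.support, f.coeff d * (if d.support = Finset.univ then 1 else 0)
            = if d = allOnes then f.coeff d else 0 := by
          intro d hd
          by_cases hsup : d.support = Finset.univ
          · have hdall : d = allOnes := by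
              have hsum : ∑ i : Fin n, d i ≤ n := by
                have h1 : d.sum (fun _ e => e) ≤ f.totalDegree :=
                  MvPolynomial.le_totalDegree hd
                have h2 : d.sum (fun _ e => e) = ∑ i : Fin n, d i := by
                  rw [Finsupp.sum, hsup]
                exact h2 ▸ (h1.trans hf)
              have hone : ∀ i, 1 ≤ d i := by
                intro i
                have : i ∈ d.support := hsup ▸ Finset.mem_univ i
                exact Nat.one_le_iff_ne_zero.mpr (Finsupp.mem_support_iff.mp this)
              have : ∀ i, d i = 1 := by
                intro i
                by_contra hne
                have h2 : 2 ≤ d i := by have := hone i; omega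
                have hlt : ∑ j : Fin n, (1 : ℕ) < ∑ j : Fin n, d j :=
                  Finset.sum_lt_sum (fun j _ => hone j)
                    ⟨i, Finset.mem_univ i, by show 1 < d i; omega⟩
                simp only [Finset.sum_const, smul_eq_mul, mul_one, Finset.card_univ,
                  Fintype.card_fin] at hlt
                omega
              ext i
              rw [this i, hallOnesApp i]
            subst hdall
            simp [hsup]
          · have hdall : d ≠ allOnes := by
              intro h
              apply hsup
              rw [h]
              ext i
              simp [Finsupp.mem_support_iff, hallOnesApp i]
            simp [hsup, hdall]
        rw [Finset.sum_congr rfl hkey]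
        by_cases hmem : allOnes ∈ f.support
        · rw [Finset.sum_eq_single_of_mem allOnes hmem (fun b _ hb => if_neg hb)]
          simp
        · rw [Finset.sum_eq_zero (fun d hd => if_neg (fun h => hmem (by rwa [h] at hd))),
            MvPolynomial.notMem_support_iff.mp hmem]
    _ = ∑ d ∈ f.support, f.coeff d *
          ∑ S : Finset (Fin n), (-1 : ℝ) ^ (n - S.card) * (if d.support ⊆ S then 1 else 0) := by
        exact Finset.sum_congr rfl fun d _ => by rw [aux_key]
    _ = ∑ S : Finset (Fin n), (-1 : ℝ) ^ (n - S.card) *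
          MvPolynomial.eval (fun i => if i ∈ S then (1 : ℝ) else 0) f := by
        simp only [heval, Finset.mul_sum]
        rw [Finset.sum_comm]
        exact Finset.sum_congr rfl fun d _ => Finset.sum_congr rfl fun S _ => by ring
end

section
/- Let Δ be the complete fan in ℝ² whose rays are spanned by (1,1), (1,−1), (−1,−1), (−1,1) and whose maximal cones are the four cones spanned by adjacent pairs. With equivariant multiplicities e_{σ₁} = e_{σ₃} = 2/(a²−b²) and e_{σ₂} = e_{σ₄} = −2/(a²−b²) (where σ₁,σ₃ contain the ±x-axes and σ₂,σ₄ contain the ±y-axes, a,b the standard coordinates on the dual), for any quadruple of homogeneous degree-2 polynomials f₁,f₂,f₃,f₄ ∈ ℤ[a,b] agreeing on the shared rays (i.e., forming a piecewise polynomial of degree 2 on Δ), the sum ∑ᵢ e_{σᵢ} fᵢ is an even integer; and there exists such a piecewise polynomial with ∑ᵢ e_{σᵢ} fᵢ = 2. -/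
/-!
The alternating sum `f₁ - f₂ + f₃ - f₄` is a homogeneous quadratic vanishing at `(1, -1)` and
at `(1, 1)` (the conditions on the rays through `(-1, ±1)` transfer to the opposite rays by
homogeneity). A binary quadratic form over `ℤ` vanishing on both diagonals is `c (a² - b²)` with
`c ∈ ℤ`, so `∑ᵢ e_{σᵢ} fᵢ = 2 (f₁ - f₂ + f₃ - f₄) / (a² - b²) = 2c`. The value `2` is attained by
`a² - b²` on `σ₁` and `0` on the other cones.
-/

open MvPolynomial

theorem Finsupp.fin_two_mem_of_degree_eq_two (m : Fin 2 →₀ ℕ) (hm : m.degree = 2) :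
    m ∈ ({single 0 2, single 0 1 + single 1 1, single 1 2} : Finset (Fin 2 →₀ ℕ)) := by
  have hsplit : m = single 0 (m 0) + single 1 (m 1) := by
    ext i; fin_cases i <;> simp
  have hsum : m 0 + m 1 = 2 := by simpa [degree_eq_sum, Fin.sum_univ_two] using hm
  obtain ⟨h0, h1⟩ | ⟨h0, h1⟩ | ⟨h0, h1⟩ :
      m 0 = 2 ∧ m 1 = 0 ∨ m 0 = 1 ∧ m 1 = 1 ∨ m 0 = 0 ∧ m 1 = 2 := by omega
  all_goals rw [hsplit, h0, h1]; simp

namespace MvPolynomial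

variable {R : Type*} [CommRing R]

theorem IsHomogeneous.eq_quadratic_fin_two {p : MvPolynomial (Fin 2) R}
    (hp : p.IsHomogeneous 2) :
    p = C (p.coeff (.single 0 2)) * X 0 ^ 2
      + C (p.coeff (.single 0 1 + .single 1 1)) * (X 0 * X 1)
      + C (p.coeff (.single 1 2)) * X 1 ^ 2 := by
  have hsupp : p.support ⊆ {.single 0 2, .single 0 1 + .single 1 1, .single 1 2} :=
    fun m hm => Finsupp.fin_two_mem_of_degree_eq_two m <| by
      rw [Finsupp.degree_eq_weight_one]; exact hp (mem_support_iff.mp hm)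
  conv_lhs => rw [p.as_sum, Finset.sum_subset hsupp fun m _ hm => by
    rw [notMem_support_iff.mp hm, monomial_zero]]
  rw [Finset.sum_insert (by simp [Finsupp.ext_iff]), Finset.sum_insert (by simp [Finsupp.ext_iff]),
    Finset.sum_singleton, X_pow_eq_monomial, X_pow_eq_monomial]
  simp only [X, monomial_mul, C_mul_monomial, mul_one, add_assoc]

theorem IsHomogeneous.eq_C_mul_X_sq_sub_X_sq [NoZeroDivisors R] [CharZero R]
    {p : MvPolynomial (Fin 2) R} (hp : p.IsHomogeneous 2)
    (h₁ : eval ![1, 1] p = 0) (h₂ : eval ![1, -1] p = 0) :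
    p = C (p.coeff (.single 0 2)) * (X 0 ^ 2 - X 1 ^ 2) := by
  have hp' := hp.eq_quadratic_fin_two
  set a := p.coeff (.single 0 2)
  set b := p.coeff (.single 0 1 + .single 1 1)
  set c := p.coeff (.single 1 2)
  rw [hp'] at h₁ h₂ ⊢
  simp only [map_add, map_mul, map_pow, eval_C, eval_X, Matrix.cons_val_zero, Matrix.cons_val_one,
    Matrix.cons_val_fin_one, one_pow, mul_one, mul_neg, even_two, Even.neg_pow] at h₁ h₂
  have hb : b = 0 := by
    have : 2 * b = 0 := by linear_combination h₁ - h₂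
    simpa using this
  have hc : c = -a := by linear_combination h₁ - hb
  rw [hb, hc, C_0, C_neg]
  ring

theorem X_sq_sub_X_sq_ne_zero [Nontrivial R] : (X 0 ^ 2 - X 1 ^ 2 : MvPolynomial (Fin 2) R) ≠ 0 :=
  fun h => by simpa using congrArg (eval ![1, 0]) h

end MvPolynomial

/-- For the complete fan over the square with vertices `(±1,±1)`, with equivariant
multiplicities `e_{σ₁} = e_{σ₃} = 2/(a²−b²)` and `e_{σ₂} = e_{σ₄} = −2/(a²−b²)`:
for every piecewise polynomial of degree 2 (homogeneous quadratics `f₁,…,f₄ ∈ ℤ[a,b]`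
agreeing on the shared rays), the sum `∑ᵢ e_{σᵢ} fᵢ` is an even integer; and there is
such a piecewise polynomial with `∑ᵢ e_{σᵢ} fᵢ = 2`. -/
theorem stmt_10 :
    let K := FractionRing (MvPolynomial (Fin 2) ℤ)
    let A : K := algebraMap (MvPolynomial (Fin 2) ℤ) K (MvPolynomial.X 0)
    let B : K := algebraMap (MvPolynomial (Fin 2) ℤ) K (MvPolynomial.X 1)
    let e : Fin 4 → K :=
      ![2 / (A ^ 2 - B ^ 2), -(2 / (A ^ 2 - B ^ 2)),
        2 / (A ^ 2 - B ^ 2), -(2 / (A ^ 2 - B ^ 2))]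
    let PW : (Fin 4 → MvPolynomial (Fin 2) ℤ) → Prop := fun f =>
      (∀ i, (f i).IsHomogeneous 2) ∧
      (∀ t : ℤ, MvPolynomial.eval ![t, -t] (f 0) = MvPolynomial.eval ![t, -t] (f 1)) ∧
      (∀ t : ℤ, MvPolynomial.eval ![-t, -t] (f 1) = MvPolynomial.eval ![-t, -t] (f 2)) ∧
      (∀ t : ℤ, MvPolynomial.eval ![-t, t] (f 2) = MvPolynomial.eval ![-t, t] (f 3)) ∧
      (∀ t : ℤ, MvPolynomial.eval ![t, t] (f 3) = MvPolynomial.eval ![t, t] (f 0))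
    (∀ f, PW f → ∃ c : ℤ, Even c ∧
        ∑ i, e i * algebraMap (MvPolynomial (Fin 2) ℤ) K (f i) = (c : K)) ∧
    (∃ f, PW f ∧ ∑ i, e i * algebraMap (MvPolynomial (Fin 2) ℤ) K (f i) = 2) := by
  intro K A B e PW
  set φ := algebraMap (MvPolynomial (Fin 2) ℤ) K
  have hφD : φ (X 0 ^ 2 - X 1 ^ 2) = A ^ 2 - B ^ 2 := by simp [φ, A, B]
  have hD : A ^ 2 - B ^ 2 ≠ 0 := hφD ▸
    (map_ne_zero_iff φ (IsFractionRing.injective _ _)).mpr X_sq_sub_X_sq_ne_zero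
  have hsum (f : Fin 4 → MvPolynomial (Fin 2) ℤ) :
      ∑ i, e i * φ (f i) = 2 / (A ^ 2 - B ^ 2) * φ (f 0 - f 1 + f 2 - f 3) := by
    simp only [e, Fin.sum_univ_four, Matrix.cons_val_zero, Matrix.cons_val_one, Matrix.cons_val,
      map_sub, map_add]
    ring
  constructor
  · rintro f ⟨hhom, h01, h12, h23, h30⟩
    have h12' := h12 (-1)
    have h23' := h23 (-1)
    simp only [neg_neg] at h12' h23'
    obtain ⟨c, hc⟩ : ∃ c, f 0 - f 1 + f 2 - f 3 = C c * (X 0 ^ 2 - X 1 ^ 2) :=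
      ⟨_, (((hhom 0).sub (hhom 1)).add (hhom 2)).sub (hhom 3) |>.eq_C_mul_X_sq_sub_X_sq
        (by simp only [map_sub, map_add]; linear_combination -h30 1 - h12')
        (by simp only [map_sub, map_add]; linear_combination h01 1 + h23')⟩
    refine ⟨2 * c, even_two_mul c, ?_⟩
    rw [hsum, hc, map_mul, hφD, mul_left_comm, div_mul_cancel₀ _ hD, show φ (C c) = c from eq_intCast (φ.comp C) c]
    push_cast
    ring
  · refine ⟨![X 0 ^ 2 - X 1 ^ 2, 0, 0, 0], ⟨?_, ?_, ?_, ?_, ?_⟩, ?_⟩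
    · intro i
      fin_cases i
      exacts [(isHomogeneous_X_pow 0 2).sub (isHomogeneous_X_pow 1 2), isHomogeneous_zero _ _ _,
        isHomogeneous_zero _ _ _, isHomogeneous_zero _ _ _]
    iterate 4 (intro t; simp)
    rw [hsum]
    simpa [hφD] using div_mul_cancel₀ (2 : K) hD
end
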